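/- Let g be an invertible m×m real matrix, and let c be an m×m real lower triangular matrix with strictly positive diagonal entries such that gᵀg = c·cᵀ (a Cholesky factorization of gᵀg). Let s be the diagonal matrix whose diagonal equals the diagonal of c. Then: (i) k := g·(cᵀ)⁻¹ is orthogonal (kᵀk = 1); (ii) n := (c·s⁻¹)ᵀ is upper triangular with all diagonal entries equal to 1; and (iii) g = k · s · n, so (k, s, n) is the Iwasawa decomposition of g. -/
import Mathlib


open Matrix

theorem iwasawa_from_cholesky {m : ℕ} (g c : Matrix (Fin m) (Fin m) ℝ)
    (hg : IsUnit g)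
    (hlow : ∀ i j : Fin m, i < j → c i j = 0)
    (hdiag : ∀ i, 0 < c i i)
    (hchol : gᵀ * g = c * cᵀ) :
    (g * (cᵀ)⁻¹)ᵀ * (g * (cᵀ)⁻¹) = 1 ∧
    (∀ i j : Fin m, j < i → (c * (Matrix.diagonal fun i => c i i)⁻¹)ᵀ i j = 0) ∧
    (∀ i, (c * (Matrix.diagonal fun i => c i i)⁻¹)ᵀ i i = 1) ∧
    g = (g * (cᵀ)⁻¹) * (Matrix.diagonal fun i => c i i) *
        (c * (Matrix.diagonal fun i => c i i)⁻¹)ᵀ := by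
  have hcdet : c.det = ∏ i, c i i := by
    apply Matrix.det_of_lowerTriangular
    intro i j h
    exact hlow i j h
  have hcunit : IsUnit c.det := by
    rw [hcdet]
    exact (Finset.prod_pos fun i _ => hdiag i).ne'.isUnit
  have hctunit : IsUnit (cᵀ).det := by rwa [Matrix.det_transpose]
  have hsinv : (Matrix.diagonal fun i => c i i)⁻¹
      = Matrix.diagonal fun i => (c i i)⁻¹ := by
    apply Matrix.inv_eq_right_inv
    rw [Matrix.diagonal_mul_diagonal]
    have : (fun i => c i i * (c i i)⁻¹) = fun _ => (1:ℝ) := by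
      funext i; exact mul_inv_cancel₀ (hdiag i).ne'
    rw [this, Matrix.diagonal_one]
  refine ⟨?_, ?_, ?_, ?_⟩
  · calc (g * (cᵀ)⁻¹)ᵀ * (g * (cᵀ)⁻¹)
        = ((cᵀ)⁻¹)ᵀ * (gᵀ * g) * (cᵀ)⁻¹ := by
          simp only [Matrix.transpose_mul, Matrix.mul_assoc]
      _ = c⁻¹ * (c * cᵀ) * (cᵀ)⁻¹ := by
          rw [hchol, Matrix.transpose_nonsing_inv, Matrix.transpose_transpose]
      _ = 1 := by
          rw [← Matrix.mul_assoc, Matrix.nonsing_inv_mul c hcunit, Matrix.one_mul,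
            Matrix.mul_nonsing_inv _ hctunit]
  · intro i j h
    rw [Matrix.transpose_apply, hsinv, Matrix.mul_diagonal, hlow j i h, zero_mul]
  · intro i
    rw [Matrix.transpose_apply, hsinv, Matrix.mul_diagonal,
      mul_inv_cancel₀ (hdiag i).ne']
  · have hsunit : IsUnit (Matrix.diagonal fun i => c i i).det := by
      rw [Matrix.det_diagonal]
      exact (Finset.prod_pos fun i _ => hdiag i).ne'.isUnit
    calc g = g * (cᵀ)⁻¹ * cᵀ := by
          rw [Matrix.mul_assoc, Matrix.nonsing_inv_mul _ hctunit, Matrix.mul_one]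
      _ = _ := by
          rw [Matrix.transpose_mul, hsinv, Matrix.diagonal_transpose,
            Matrix.mul_assoc, Matrix.mul_assoc,
            ← Matrix.mul_assoc (Matrix.diagonal fun i => c i i),
            Matrix.diagonal_mul_diagonal]
          have : (fun i => c i i * (c i i)⁻¹) = fun _ => (1:ℝ) := by
            funext i; exact mul_inv_cancel₀ (hdiag i).ne'
          rw [this, Matrix.diagonal_one, Matrix.one_mul, Matrix.mul_assoc]
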